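/- arXiv:2003.08298 — 4 statements merged into one kernel-verified Lean document; each statement's English description precedes it below -/
import Mathlib

section
/- For every n ≥ 1 there exists a graph ontology O_n with 3n+1 vertices and 4n edges, and vertices v, x, such that the consequence (v,x) has exactly 2^n distinct justifications w.r.t. O_n. -/
def IsJustification {A C : Type*} (ent : Finset A → C → Prop)
    (O M : Finset A) (c : C) : Prop :=
  M ⊆ O ∧ ent M c ∧ ∀ M' ⊂ M, ¬ ent M' c

def Reach {V : Type*} (O : Finset (V × V)) (v w : V) : Prop :=
  Relation.ReflTransGen (fun a b => (a, b) ∈ O) v w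

/-- The set of vertices occurring in a graph ontology. -/
def verts {V : Type*} [DecidableEq V] (O : Finset (V × V)) : Finset V :=
  O.image Prod.fst ∪ O.image Prod.snd

/-!
A subset `M` of the chain entails `(u₀, uₙ)` iff it contains both edges of one side of every
diamond: a path from `uᵢ₋₁` to `uₙ` must leave `uᵢ₋₁` into `aᵢ` or `bᵢ`, and the only edge
leaving that vertex goes on to `uᵢ`. So the entailing subsets are the supersets of the `2ⁿ`
paths choosing one side of each diamond; these paths form an antichain, hence they are exactly
the justifications.
-/

section Justification

variable {A C ι : Type*} (ent : Finset A → C → Prop) (O : Finset A) (c : C) (P : ι → Finset A)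

theorem isJustification_iff_exists_eq (hPO : ∀ i, P i ⊆ O)
    (hent : ∀ M ⊆ O, ent M c ↔ ∃ i, P i ⊆ M) (hP : ∀ i j, P i ⊆ P j → i = j) (M : Finset A) :
    IsJustification ent O M c ↔ ∃ i, M = P i := by
  constructor
  · rintro ⟨hMO, hM, hmin⟩
    obtain ⟨i, hiM⟩ := (hent M hMO).1 hM
    refine ⟨i, by_contra fun hne => hmin (P i) (hiM.ssubset_of_ne (Ne.symm hne)) ?_⟩
    exact (hent (P i) (hPO i)).2 ⟨i, le_rfl⟩
  · rintro ⟨i, rfl⟩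
    refine ⟨hPO i, (hent (P i) (hPO i)).2 ⟨i, le_rfl⟩, fun M' hM' hent' => ?_⟩
    obtain ⟨j, hjM'⟩ := (hent M' (hM'.subset.trans (hPO i))).1 hent'
    obtain rfl := hP j i (hjM'.trans hM'.subset)
    exact hM'.not_subset hjM'

theorem ncard_setOf_isJustification (hPO : ∀ i, P i ⊆ O)
    (hent : ∀ M ⊆ O, ent M c ↔ ∃ i, P i ⊆ M) (hP : ∀ i j, P i ⊆ P j → i = j) :
    {M | IsJustification ent O M c}.ncard = Nat.card ι := by
  have hrange : {M | IsJustification ent O M c} = Set.range P := Set.ext fun M =>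
    (isJustification_iff_exists_eq ent O c P hPO hent hP M).trans (exists_congr fun _ => eq_comm)
  rw [hrange, Set.ncard_range_of_injective fun i j h => hP i j h.le]

end Justification

namespace DiamondChain

abbrev Edge := (ℕ × ℕ) × (ℕ × ℕ)

-- `uᵢ` is `(i, 0)`; the inner vertices `aᵢ₊₁`, `bᵢ₊₁` following `uᵢ` are `(i, 1)`, `(i, 2)`.
def hub (i : ℕ) : ℕ × ℕ := (i, 0)

def mid (i : ℕ) (b : Bool) : ℕ × ℕ := (i, cond b 1 2)

def inEdge (i : ℕ) (b : Bool) : Edge := (hub i, mid i b)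

def outEdge (i : ℕ) (b : Bool) : Edge := (mid i b, hub (i + 1))

def chain (n : ℕ) : Finset Edge :=
  (Finset.range n ×ˢ (Finset.univ : Finset (Bool × Bool))).image
    fun e => cond e.2.2 (outEdge e.1 e.2.1) (inEdge e.1 e.2.1)

def path (n : ℕ) (f : Fin n → Bool) : Finset Edge :=
  Finset.univ.biUnion fun i : Fin n => {inEdge i (f i), outEdge i (f i)}

theorem mem_chain {n : ℕ} {p : Edge} :
    p ∈ chain n ↔ ∃ i < n, ∃ b, p = inEdge i b ∨ p = outEdge i b := by
  simp only [chain, Finset.mem_image, Finset.mem_product, Finset.mem_range, Finset.mem_univ,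
    and_true, Prod.exists, Bool.exists_bool, cond_true, cond_false]
  aesop

theorem mem_path {n : ℕ} {f : Fin n → Bool} {p : Edge} :
    p ∈ path n f ↔ ∃ i : Fin n, p = inEdge i (f i) ∨ p = outEdge i (f i) := by
  simp [path]

theorem card_chain (n : ℕ) : (chain n).card = 4 * n := by
  rw [chain, Finset.card_image_of_injective, Finset.card_product, Finset.card_range]
  · simp [mul_comm]
  · rintro ⟨i, b, o⟩ ⟨j, b', o'⟩ h
    cases b <;> cases b' <;> cases o <;> cases o' <;>
      simp_all [inEdge, outEdge, hub, mid]

theorem verts_chain {n : ℕ} (hn : 1 ≤ n) :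
    verts (chain n) = Finset.range (n + 1) ×ˢ {0} ∪ Finset.range n ×ˢ {1, 2} := by
  ext ⟨i, k⟩
  simp only [verts, Finset.mem_union, Finset.mem_image, mem_chain, Finset.mem_product,
    Finset.mem_range, Finset.mem_singleton, Finset.mem_insert]
  constructor
  · rintro (⟨p, ⟨j, hj, b, rfl | rfl⟩, h⟩ | ⟨p, ⟨j, hj, b, rfl | rfl⟩, h⟩) <;>
      cases b <;> simp_all [inEdge, outEdge, hub, mid, Prod.ext_iff] <;> omega
  · rintro (⟨hi, rfl⟩ | ⟨hi, hk⟩)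
    · obtain hi | rfl := Nat.lt_succ_iff_lt_or_eq.1 hi
      · exact Or.inl ⟨inEdge i true, ⟨i, hi, true, Or.inl rfl⟩, rfl⟩
      · obtain ⟨m, rfl⟩ := Nat.exists_eq_add_of_le' hn
        exact Or.inr ⟨outEdge m true, ⟨m, by omega, true, Or.inr rfl⟩, rfl⟩
    · obtain ⟨b, rfl⟩ : ∃ b, k = cond b 1 2 := by
        rcases hk with rfl | rfl
        exacts [⟨true, rfl⟩, ⟨false, rfl⟩]
      exact Or.inr ⟨inEdge i b, ⟨i, hi, b, Or.inl rfl⟩, rfl⟩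

theorem card_verts_chain {n : ℕ} (hn : 1 ≤ n) : (verts (chain n)).card = 3 * n + 1 := by
  rw [verts_chain hn, Finset.card_union_of_disjoint (Finset.disjoint_product.2 (Or.inr (by simp))),
    Finset.card_product, Finset.card_product, Finset.card_range, Finset.card_range,
    Finset.card_singleton, Finset.card_pair (by decide)]
  ring

theorem path_subset_chain {n : ℕ} (f : Fin n → Bool) : path n f ⊆ chain n := fun p hp => by
  obtain ⟨i, hi⟩ := mem_path.1 hp
  exact mem_chain.2 ⟨i, i.isLt, f i, hi⟩

theorem eq_of_path_subset_path {n : ℕ} {f g : Fin n → Bool} (h : path n f ⊆ path n g) :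
    f = g := by
  funext i
  obtain ⟨j, hj⟩ := mem_path.1 (h (mem_path.2 ⟨i, Or.inl rfl⟩))
  cases hfi : f i <;> cases hgj : g j <;> simp_all [inEdge, outEdge, hub, mid, Fin.val_inj]

theorem exists_eq_inEdge {n i : ℕ} {p : Edge} (hp : p ∈ chain n) (h : p.1 = hub i) :
    ∃ b, p = inEdge i b := by
  obtain ⟨j, -, b, rfl | rfl⟩ := mem_chain.1 hp <;>
    cases b <;> simp_all [inEdge, outEdge, hub, mid]

theorem eq_outEdge {n i : ℕ} {b : Bool} {p : Edge} (hp : p ∈ chain n) (h : p.1 = mid i b) :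
    p = outEdge i b := by
  obtain ⟨j, -, b', rfl | rfl⟩ := mem_chain.1 hp <;>
    cases b <;> cases b' <;> simp_all [inEdge, outEdge, hub, mid]

theorem reach_of_forall_exists {n : ℕ} {M : Finset Edge}
    (h : ∀ i < n, ∃ b, inEdge i b ∈ M ∧ outEdge i b ∈ M) : Reach M (hub 0) (hub n) := by
  induction n with
  | zero => exact Relation.ReflTransGen.refl
  | succ n ih =>
    obtain ⟨b, hin, hout⟩ := h n n.lt_succ_self
    exact ((ih fun i hi => h i (hi.trans n.lt_succ_self)).tail hin).tail hout

theorem reach_path (n : ℕ) (f : Fin n → Bool) : Reach (path n f) (hub 0) (hub n) :=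
  reach_of_forall_exists fun i hi =>
    ⟨f ⟨i, hi⟩, mem_path.2 ⟨⟨i, hi⟩, Or.inl rfl⟩, mem_path.2 ⟨⟨i, hi⟩, Or.inr rfl⟩⟩

theorem exists_crossing {n i : ℕ} {M : Finset Edge} (hM : M ⊆ chain n) (hi : i < n)
    (h : Reach M (hub i) (hub n)) :
    ∃ b, inEdge i b ∈ M ∧ outEdge i b ∈ M ∧ Reach M (hub (i + 1)) (hub n) := by
  obtain hin | ⟨c, hc, h⟩ := h.cases_head
  · simp [hub] at hin; omega
  obtain ⟨b, hb⟩ := exists_eq_inEdge (hM hc) rfl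
  obtain rfl : c = mid i b := congrArg Prod.snd hb
  obtain hmid | ⟨d, hd, h⟩ := h.cases_head
  · cases b <;> simp [hub, mid] at hmid
  obtain rfl : d = hub (i + 1) := congrArg Prod.snd (eq_outEdge (hM hd) rfl)
  exact ⟨b, hb ▸ hc, hd, h⟩

theorem reach_iff_exists_path_subset {n : ℕ} {M : Finset Edge} (hM : M ⊆ chain n) :
    Reach M (hub 0) (hub n) ↔ ∃ f, path n f ⊆ M := by
  constructor
  · intro h
    have hreach : ∀ i ≤ n, Reach M (hub i) (hub n) := by
      intro i hi
      induction i with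
      | zero => exact h
      | succ i ih =>
        obtain ⟨-, -, -, h'⟩ := exists_crossing hM hi (ih (by omega))
        exact h'
    choose f hin hout using fun i : Fin n => exists_crossing hM i.isLt (hreach i i.isLt.le)
    refine ⟨f, fun p hp => ?_⟩
    obtain ⟨i, rfl | rfl⟩ := mem_path.1 hp
    exacts [hin i, (hout i).1]
  · rintro ⟨f, hf⟩
    exact Relation.ReflTransGen.mono (fun _ _ hab => hf hab) _ _ (reach_path n f)

end DiamondChain

open DiamondChain in
theorem stmt_6 (n : ℕ) (hn : 1 ≤ n) :
    ∃ (O : Finset ((ℕ × ℕ) × (ℕ × ℕ))) (v x : ℕ × ℕ),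
      (verts O).card = 3 * n + 1 ∧ O.card = 4 * n ∧
      {M : Finset ((ℕ × ℕ) × (ℕ × ℕ)) |
        IsJustification (fun S c => Reach S c.1 c.2) O M (v, x)}.ncard = 2 ^ n := by
  refine ⟨chain n, hub 0, hub n, card_verts_chain hn, card_chain n, ?_⟩
  rw [ncard_setOf_isJustification (fun S c => Reach S c.1 c.2) (chain n) (hub 0, hub n) (path n)
    path_subset_chain (fun M hM => reach_iff_exists_path_subset hM)
    fun f g => eq_of_path_subset_path]
  simp
end

section
/- In the diamond-chain graph O_n (n diamonds in series), every justification of (u_0, u_n) has exactly 2n edges, and distinct choices of a-side or b-side in each diamond yield distinct justifications; hence the number of justifications of (u_0,u_n) w.r.t. O_n is 2^n. -/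
/-- The diamond-chain graph `O_n`.  Vertices are pairs `(t, i) : ℕ × ℕ`:
`u_i = (0, i)`, `a_i = (1, i)`, `b_i = (2, i)`.  For each `1 ≤ i ≤ n` (indexed by
`i - 1 ∈ range n` below) it has the edges
`(u_{i-1}, a_i), (a_i, u_i), (u_{i-1}, b_i), (b_i, u_i)`. -/
def diamondChain (n : ℕ) : Finset ((ℕ × ℕ) × (ℕ × ℕ)) :=
  (Finset.range n).biUnion (fun i =>
    {((0, i), (1, i + 1)), ((1, i + 1), (0, i + 1)),
     ((0, i), (2, i + 1)), ((2, i + 1), (0, i + 1))})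

/-- The candidate justification determined by a choice of side (a-side or b-side)
in each of the `n` diamonds. -/
def sideJust (n : ℕ) (f : Fin n → Bool) : Finset ((ℕ × ℕ) × (ℕ × ℕ)) :=
  Finset.univ.biUnion (fun i : Fin n =>
    let s : ℕ := if f i then 1 else 2
    {((0, (i : ℕ)), (s, (i : ℕ) + 1)), ((s, (i : ℕ) + 1), (0, (i : ℕ) + 1))})

/-!
The only edges of `O_n` leaving `u_i` go to `a_{i+1}` and `b_{i+1}`, and the only edge leaving
either of these goes to `u_{i+1}`. So following a path from `u_0` to `u_n` shows that any subset
of `O_n` entailing `(u_0, u_n)` contains both edges of one side of every diamond, i.e. contains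
some `sideJust n f`. Each `sideJust n f` entails `(u_0, u_n)` and none is contained in another,
so the justifications are exactly the `2 ^ n` distinct sets `sideJust n f`, each with two edges
per diamond.
-/

def diamondSide (b : Bool) : ℕ := if b then 1 else 2

lemma diamondSide_ne_zero (b : Bool) : diamondSide b ≠ 0 := by
  cases b <;> decide

lemma diamondSide_injective : Function.Injective diamondSide := by
  decide

lemma mem_diamondChain {n : ℕ} {e : (ℕ × ℕ) × (ℕ × ℕ)} :
    e ∈ diamondChain n ↔ ∃ i < n, e = ((0, i), (1, i + 1)) ∨ e = ((1, i + 1), (0, i + 1)) ∨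
      e = ((0, i), (2, i + 1)) ∨ e = ((2, i + 1), (0, i + 1)) := by
  simp [diamondChain]

lemma mem_sideJust {n : ℕ} {f : Fin n → Bool} {e : (ℕ × ℕ) × (ℕ × ℕ)} :
    e ∈ sideJust n f ↔ ∃ i : Fin n, e = ((0, (i : ℕ)), (diamondSide (f i), (i : ℕ) + 1)) ∨
      e = ((diamondSide (f i), (i : ℕ) + 1), (0, (i : ℕ) + 1)) := by
  simp [sideJust, diamondSide]

lemma exists_eq_diamondSide_of_mem_diamondChain {n i : ℕ} {v : ℕ × ℕ}
    (h : ((0, i), v) ∈ diamondChain n) : ∃ b, v = (diamondSide b, i + 1) := by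
  obtain ⟨j, -, hj⟩ := mem_diamondChain.mp h
  rcases hj with hj | hj | hj | hj <;> simp only [Prod.mk.injEq] at hj <;> try omega
  · exact ⟨true, by simp [diamondSide, hj]⟩
  · exact ⟨false, by simp [diamondSide, hj]⟩

lemma eq_of_mem_diamondChain_of_fst_ne_zero {n : ℕ} {u v : ℕ × ℕ}
    (h : (u, v) ∈ diamondChain n) (hu : u.1 ≠ 0) : v = (0, u.2) := by
  obtain ⟨j, -, hj⟩ := mem_diamondChain.mp h
  rcases hj with hj | hj | hj | hj <;> simp only [Prod.mk.injEq] at hj <;>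
    obtain ⟨⟨rfl, rfl⟩, rfl⟩ := hj <;> simp_all

lemma sideJust_subset_diamondChain (n : ℕ) (f : Fin n → Bool) :
    sideJust n f ⊆ diamondChain n := by
  intro e he
  obtain ⟨i, hi⟩ := mem_sideJust.mp he
  refine mem_diamondChain.mpr ⟨i, i.2, ?_⟩
  rcases hi with rfl | rfl <;> cases f i <;> simp [diamondSide]

lemma reach_sideJust (n : ℕ) (f : Fin n → Bool) {j : ℕ} (hj : j ≤ n) :
    Reach (sideJust n f) (0, 0) (0, j) := by
  induction j with
  | zero => exact .refl
  | succ j ih =>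
    let i : Fin n := ⟨j, hj⟩
    exact ((ih i.2.le).tail (mem_sideJust.mpr ⟨i, .inl rfl⟩)).tail
      (mem_sideJust.mpr ⟨i, .inr rfl⟩)

lemma exists_side_of_reach {n i : ℕ} {M : Finset ((ℕ × ℕ) × (ℕ × ℕ))}
    (hM : M ⊆ diamondChain n) (hi : i < n) (h : Reach M (0, i) (0, n)) :
    ∃ b, ((0, i), (diamondSide b, i + 1)) ∈ M ∧ ((diamondSide b, i + 1), (0, i + 1)) ∈ M ∧
      Reach M (0, i + 1) (0, n) := by
  obtain h | ⟨v, hv, hvn⟩ := Relation.ReflTransGen.cases_head_iff.mp h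
  · simp only [Prod.mk.injEq] at h; omega
  obtain ⟨b, rfl⟩ := exists_eq_diamondSide_of_mem_diamondChain (hM hv)
  obtain h | ⟨w, hw, hwn⟩ := Relation.ReflTransGen.cases_head_iff.mp hvn
  · simp only [Prod.mk.injEq] at h; exact absurd h.1 (diamondSide_ne_zero b)
  obtain rfl := eq_of_mem_diamondChain_of_fst_ne_zero (hM hw) (diamondSide_ne_zero b)
  exact ⟨b, hv, hw, hwn⟩

lemma exists_sideJust_subset_of_reach {n : ℕ} {M : Finset ((ℕ × ℕ) × (ℕ × ℕ))}
    (hM : M ⊆ diamondChain n) (h : Reach M (0, 0) (0, n)) :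
    ∃ f : Fin n → Bool, sideJust n f ⊆ M := by
  have hreach : ∀ i ≤ n, Reach M (0, i) (0, n) := by
    intro i hi
    induction i with
    | zero => exact h
    | succ i ih =>
      obtain ⟨_, _, _, hnext⟩ := exists_side_of_reach hM hi (ih (by omega))
      exact hnext
  have hside : ∀ i : Fin n, ∃ b, ((0, (i : ℕ)), (diamondSide b, (i : ℕ) + 1)) ∈ M ∧
      ((diamondSide b, (i : ℕ) + 1), (0, (i : ℕ) + 1)) ∈ M := fun i =>
    have ⟨b, h₁, h₂, _⟩ := exists_side_of_reach hM i.2 (hreach i i.2.le)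
    ⟨b, h₁, h₂⟩
  choose f hf using hside
  refine ⟨f, fun e he => ?_⟩
  obtain ⟨i, rfl | rfl⟩ := mem_sideJust.mp he
  exacts [(hf i).1, (hf i).2]

lemma eq_of_sideJust_subset {n : ℕ} {f g : Fin n → Bool} (h : sideJust n f ⊆ sideJust n g) :
    f = g := by
  funext i
  obtain ⟨k, hk | hk⟩ := mem_sideJust.mp (h (mem_sideJust.mpr ⟨i, .inl rfl⟩)) <;>
    simp only [Prod.mk.injEq] at hk
  · obtain rfl : i = k := Fin.ext hk.1.2
    exact diamondSide_injective hk.2.1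
  · exact absurd hk.1.1.symm (diamondSide_ne_zero _)

lemma isJustification_sideJust (n : ℕ) (f : Fin n → Bool) :
    IsJustification (fun S c => Reach S c.1 c.2) (diamondChain n) (sideJust n f)
      ((0, 0), (0, n)) := by
  refine ⟨sideJust_subset_diamondChain n f, reach_sideJust n f le_rfl, fun M hM hreach => ?_⟩
  obtain ⟨g, hg⟩ := exists_sideJust_subset_of_reach
    (hM.subset.trans (sideJust_subset_diamondChain n f)) hreach
  obtain rfl := eq_of_sideJust_subset (hg.trans hM.subset)
  exact hM.not_subset hg

lemma exists_eq_sideJust_of_isJustification {n : ℕ} {M : Finset ((ℕ × ℕ) × (ℕ × ℕ))}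
    (h : IsJustification (fun S c => Reach S c.1 c.2) (diamondChain n) M ((0, 0), (0, n))) :
    ∃ f, sideJust n f = M := by
  obtain ⟨hsub, hreach, hmin⟩ := h
  obtain ⟨f, hf⟩ := exists_sideJust_subset_of_reach hsub hreach
  exact ⟨f, hf.eq_of_not_ssubset fun hlt => hmin _ hlt (reach_sideJust n f le_rfl)⟩

lemma card_sideJust (n : ℕ) (f : Fin n → Bool) : (sideJust n f).card = 2 * n := by
  rw [sideJust, Finset.card_biUnion]
  · have hpair (i : Fin n) : ({((0, (i : ℕ)), (diamondSide (f i), (i : ℕ) + 1)),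
        ((diamondSide (f i), (i : ℕ) + 1), (0, (i : ℕ) + 1))} : Finset _).card = 2 :=
      Finset.card_pair fun h => diamondSide_ne_zero (f i) (congrArg (·.1.1) h).symm
    refine (Finset.sum_congr rfl fun i _ => hpair i).trans ?_
    simp [mul_comm]
  · -- every edge of the `i`-th diamond ends at level `i + 1`
    intro i _ j _ hij
    refine Finset.disjoint_left.mpr fun e hi hj => hij (Fin.ext ?_)
    simp only [Finset.mem_insert, Finset.mem_singleton] at hi hj
    rcases hi with rfl | rfl <;> rcases hj with h | h <;> simpa using congrArg (·.2.2) h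

theorem stmt_7 (n : ℕ) :
    (∀ M, IsJustification (fun S c => Reach S c.1 c.2) (diamondChain n) M
        ((0, 0), (0, n)) → M.card = 2 * n) ∧
    Function.Injective (sideJust n) ∧
    (∀ f : Fin n → Bool,
      IsJustification (fun S c => Reach S c.1 c.2) (diamondChain n) (sideJust n f)
        ((0, 0), (0, n))) ∧
    {M : Finset ((ℕ × ℕ) × (ℕ × ℕ)) |
      IsJustification (fun S c => Reach S c.1 c.2) (diamondChain n) M
        ((0, 0), (0, n))}.ncard = 2 ^ n := by
  have hrange : {M : Finset ((ℕ × ℕ) × (ℕ × ℕ)) |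
      IsJustification (fun S c => Reach S c.1 c.2) (diamondChain n) M ((0, 0), (0, n))} =
      Set.range (sideJust n) :=
    Set.ext fun M => ⟨exists_eq_sideJust_of_isJustification,
      by rintro ⟨f, rfl⟩; exact isJustification_sideJust n f⟩
  have hinj : Function.Injective (sideJust n) := fun f g h => eq_of_sideJust_subset h.subset
  refine ⟨fun M hM => ?_, hinj, isJustification_sideJust n, ?_⟩
  · obtain ⟨f, rfl⟩ := exists_eq_sideJust_of_isJustification hM
    exact card_sideJust n f
  · rw [hrange, Set.ncard_range_of_injective hinj]
    simp
end

section
/- For a monotonic entailment relation and O ⊨ c, a subset R ⊆ O is a repair (a maximal subset of O not entailing c) if and only if its complement O \ R is a minimal hitting set of the family of all justifications of c w.r.t. O. -/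
/-- A repair for `c` w.r.t. `O`: a maximal subset of `O` not entailing `c`. -/
def IsRepair {A C : Type*} (ent : Finset A → C → Prop)
    (O R : Finset A) (c : C) : Prop :=
  R ⊆ O ∧ ¬ ent R c ∧ ∀ R', R ⊂ R' → R' ⊆ O → ent R' c

/-- `H` is a hitting set of the family of all justifications of `c` w.r.t. `O`. -/
def HitsAllJustifications {A C : Type*} [DecidableEq A] (ent : Finset A → C → Prop)
    (O : Finset A) (c : C) (H : Finset A) : Prop :=
  ∀ J, IsJustification ent O J c → (H ∩ J).Nonempty

/-
Monotonicity makes "hitting every justification" equivalent to "removing it destroys the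
entailment": a set `H` misses some justification iff that justification survives in `O \ H`,
iff `O \ H ⊨ c`. So the hitting sets are exactly the complements of the non-entailing subsets,
and since `R ↦ O \ R` reverses strict inclusion among subsets of `O`, maximal non-entailing
subsets correspond to minimal hitting sets.
-/

section

variable {A C : Type*} {ent : Finset A → C → Prop} {O : Finset A} {c : C}

theorem exists_isJustification_subset {M : Finset A} (hMO : M ⊆ O) (hM : ent M c) :
    ∃ J ⊆ M, IsJustification ent O J c := by
  obtain ⟨J, hJM, hJ⟩ := exists_minimal_le_of_wellFoundedLT (ent · c) M hM
  exact ⟨J, hJM, hJM.trans hMO, hJ.prop, fun _ hM'J => hJ.not_prop_of_lt hM'J⟩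

theorem hitsAllJustifications_iff_not_ent_sdiff [DecidableEq A] (mono : Monotone (ent · c))
    (H : Finset A) : HitsAllJustifications ent O c H ↔ ¬ ent (O \ H) c := by
  constructor
  · intro hH hent
    obtain ⟨J, hJ, hJust⟩ := exists_isJustification_subset Finset.sdiff_subset hent
    obtain ⟨x, hx⟩ := hH J hJust
    obtain ⟨hxH, hxJ⟩ := Finset.mem_inter.mp hx
    exact (Finset.mem_sdiff.mp (hJ hxJ)).2 hxH
  · intro hnot J hJ
    by_contra hmiss
    rw [← Finset.not_disjoint_iff_nonempty_inter, not_not] at hmiss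
    exact hnot (mono (Finset.subset_sdiff.mpr ⟨hJ.1, hmiss.symm⟩) hJ.2.1)

end

theorem Finset.sdiff_ssubset_sdiff_iff_ssubset {A : Type*} [DecidableEq A] {O R S : Finset A}
    (hR : R ⊆ O) (hS : S ⊆ O) : O \ S ⊂ O \ R ↔ R ⊂ S := by
  simp only [ssubset_iff_subset_not_subset, Finset.sdiff_subset_sdiff_iff_subset hS hR,
    Finset.sdiff_subset_sdiff_iff_subset hR hS]

theorem Finset.forall_ssuperset_iff_forall_ssubset_sdiff {A : Type*} [DecidableEq A]
    {O R : Finset A} (hR : R ⊆ O) (P : Finset A → Prop) :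
    (∀ S, R ⊂ S → S ⊆ O → P S) ↔ ∀ H ⊂ O \ R, P (O \ H) := by
  constructor
  · intro hP H hH
    have hHO : H ⊆ O := hH.subset.trans Finset.sdiff_subset
    refine hP _ ?_ Finset.sdiff_subset
    rwa [← Finset.sdiff_ssubset_sdiff_iff_ssubset hR Finset.sdiff_subset,
      Finset.sdiff_sdiff_eq_self hHO]
  · intro hP S hRS hSO
    rw [← Finset.sdiff_sdiff_eq_self hSO]
    exact hP _ ((Finset.sdiff_ssubset_sdiff_iff_ssubset hR hSO).mpr hRS)

theorem stmt_10_general {A C : Type*} [DecidableEq A] (ent : Finset A → C → Prop)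
    (mono : ∀ (O O' : Finset A) (c : C), ent O c → O ⊆ O' → ent O' c)
    (O : Finset A) (c : C) :
    ∀ R ⊆ O,
      (IsRepair ent O R c ↔
        (HitsAllJustifications ent O c (O \ R) ∧
          ∀ H ⊂ O \ R, ¬ HitsAllJustifications ent O c H)) := by
  intro R hRO
  have hits_iff := hitsAllJustifications_iff_not_ent_sdiff (O := O)
    (fun _ _ hMN hM => mono _ _ c hM hMN)
  simp only [IsRepair, hits_iff, not_not, Finset.sdiff_sdiff_eq_self hRO, hRO, true_and,
    ← Finset.forall_ssuperset_iff_forall_ssubset_sdiff hRO (ent · c)]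

theorem stmt_10 {A C : Type*} [DecidableEq A] (ent : Finset A → C → Prop)
    (mono : ∀ (O O' : Finset A) (c : C), ent O c → O ⊆ O' → ent O' c)
    (O : Finset A) (c : C) (h : ent O c) :
    ∀ R ⊆ O,
      (IsRepair ent O R c ↔
        (HitsAllJustifications ent O c (O \ R) ∧
          ∀ H ⊂ O \ R, ¬ HitsAllJustifications ent O c H)) :=
  stmt_10_general ent mono O c
end

section
/- In the graph ontology language, the consequence (v,w) with v ≠ w has a unique justification w.r.t. a finite graph O entailing (v,w) if and only if there is exactly one simple directed path from v to w in O. -/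
/-- `l` is (the vertex list of) a simple directed path from `v` to `w` in `O`. -/
def IsSimplePath {V : Type*} (O : Finset (V × V)) (l : List V) (v w : V) : Prop :=
  l.Nodup ∧ l.head? = some v ∧ l.getLast? = some w ∧
    l.Chain' (fun a b => (a, b) ∈ O)

section PathEdges

variable {V : Type*} [DecidableEq V]

def pathEdges (l : List V) : Finset (V × V) := (l.zip l.tail).toFinset

@[simp] lemma pathEdges_nil : pathEdges ([] : List V) = ∅ := rfl

@[simp] lemma pathEdges_singleton (a : V) : pathEdges [a] = ∅ := rfl

@[simp] lemma pathEdges_cons_cons (a b : V) (t : List V) :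
    pathEdges (a :: b :: t) = insert (a, b) (pathEdges (b :: t)) := by
  simp [pathEdges]

lemma fst_mem_of_mem_pathEdges {a c : V} {l : List V} (h : (a, c) ∈ pathEdges l) : a ∈ l :=
  (List.of_mem_zip (List.mem_toFinset.mp h)).1

lemma pathEdges_subset_iff {S : Finset (V × V)} :
    ∀ {l : List V}, pathEdges l ⊆ S ↔ l.IsChain fun a b => (a, b) ∈ S
  | [] => by simp
  | [_] => by simp
  | a :: b :: t => by
    rw [pathEdges_cons_cons, Finset.insert_subset_iff, pathEdges_subset_iff,
      List.isChain_cons_cons]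

lemma eq_of_pathEdges_subset :
    ∀ {l l' : List V}, l.Nodup → l'.Nodup → l'.head? = l.head? → l'.getLast? = l.getLast? →
      pathEdges l' ⊆ pathEdges l → l' = l
  | [], l', _, _, hhead, _, _ => List.head?_eq_none_iff.mp hhead
  | [x], l', _, hl', hhead, hlast, hsub => by
    obtain ⟨t, rfl⟩ := List.head?_eq_some_iff.mp hhead
    cases t with
    | nil => rfl
    | cons y t => simp at hsub
  | x :: y :: t, l', hl, hl', hhead, hlast, hsub => by
    obtain ⟨t', rfl⟩ := List.head?_eq_some_iff.mp hhead
    have hx : x ∉ y :: t := (List.nodup_cons.mp hl).1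
    cases t' with
    | nil =>
      rw [List.getLast?_singleton, List.getLast?_cons_cons, eq_comm] at hlast
      exact absurd (List.mem_of_mem_getLast? hlast) hx
    | cons y' t' =>
      have hx' : x ∉ y' :: t' := (List.nodup_cons.mp hl').1
      rw [pathEdges_cons_cons, pathEdges_cons_cons, Finset.insert_subset_iff] at hsub
      obtain ⟨hfirst, hrest⟩ := hsub
      -- the only out-edge of `x` is `(x, y)`, since `x` does not occur further along `l`
      obtain rfl : y' = y := by
        rcases Finset.mem_insert.mp hfirst with h | h
        · exact (Prod.mk.inj h).2
        · exact absurd (fst_mem_of_mem_pathEdges h) hx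
      have htail : pathEdges (y' :: t') ⊆ pathEdges (y' :: t) := fun e he => by
        rcases Finset.mem_insert.mp (hrest he) with rfl | h
        · exact absurd (fst_mem_of_mem_pathEdges he) hx'
        · exact h
      rw [List.getLast?_cons_cons, List.getLast?_cons_cons] at hlast
      rw [eq_of_pathEdges_subset hl.of_cons hl'.of_cons rfl hlast htail]

end PathEdges

section SimplePath

variable {V : Type*} {S T : Finset (V × V)} {l : List V} {a b : V}

lemma IsSimplePath.mono (hST : S ⊆ T) (hl : IsSimplePath S l a b) : IsSimplePath T l a b :=
  ⟨hl.1, hl.2.1, hl.2.2.1, hl.2.2.2.imp fun _ _ h => hST h⟩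

lemma IsSimplePath.reach (hl : IsSimplePath S l a b) : Reach S a b := by
  obtain ⟨t, rfl⟩ := List.head?_eq_some_iff.mp hl.2.1
  refine List.relationReflTransGen_of_exists_isChain_cons t hl.2.2.2 ?_
  exact Option.some.inj ((List.getLast?_eq_some_getLast _).symm.trans hl.2.2.1)

lemma IsSimplePath.restrict_pathEdges [DecidableEq V] (hl : IsSimplePath S l a b) :
    IsSimplePath (pathEdges l) l a b :=
  ⟨hl.1, hl.2.1, hl.2.2.1, pathEdges_subset_iff.mp subset_rfl⟩

/-- A walk is shortened to a simple path by cutting out the loop at each repeated vertex. -/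
lemma exists_isSimplePath_of_reach (h : Reach S a b) : ∃ l, IsSimplePath S l a b := by
  induction h using Relation.ReflTransGen.head_induction_on with
  | refl => exact ⟨[b], List.nodup_singleton b, rfl, rfl, List.isChain_singleton b⟩
  | @head a c hac _ ih =>
    obtain ⟨l, hnd, hhead, hlast, hchain⟩ := ih
    obtain ⟨t, rfl⟩ := List.head?_eq_some_iff.mp hhead
    by_cases ha : a ∈ c :: t
    · obtain ⟨p, q, hpq⟩ := List.append_of_mem ha
      have hsuffix : a :: q <:+ c :: t := hpq ▸ List.suffix_append p (a :: q)
      refine ⟨a :: q, hnd.sublist hsuffix.sublist, rfl, ?_, hchain.suffix hsuffix⟩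
      rwa [hpq, List.getLast?_append_of_ne_nil p (List.cons_ne_nil a q)] at hlast
    · refine ⟨a :: c :: t, List.nodup_cons.mpr ⟨ha, hnd⟩, rfl, ?_, hchain.cons_cons hac⟩
      rwa [List.getLast?_cons_cons]

end SimplePath

section Justification

variable {V : Type*} [DecidableEq V] {O M : Finset (V × V)} {l : List V} {a b : V}

lemma IsSimplePath.isJustification_pathEdges (hl : IsSimplePath O l a b) :
    IsJustification (fun S c => Reach S c.1 c.2) O (pathEdges l) (a, b) := by
  refine ⟨pathEdges_subset_iff.mpr hl.2.2.2, hl.restrict_pathEdges.reach, fun M' hM' hreach => ?_⟩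
  obtain ⟨l', hl'⟩ := exists_isSimplePath_of_reach hreach
  have hl'M' : pathEdges l' ⊆ M' := pathEdges_subset_iff.mpr hl'.2.2.2
  obtain rfl : l' = l := eq_of_pathEdges_subset hl.1 hl'.1 (hl'.2.1.trans hl.2.1.symm)
    (hl'.2.2.1.trans hl.2.2.1.symm) (hl'M'.trans hM'.subset)
  exact hM'.2 hl'M'

lemma IsJustification.exists_isSimplePath
    (hM : IsJustification (fun S c => Reach S c.1 c.2) O M (a, b)) :
    ∃ l, IsSimplePath O l a b ∧ pathEdges l = M := by
  obtain ⟨hMO, hreach, hmin⟩ := hM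
  obtain ⟨l, hl⟩ := exists_isSimplePath_of_reach hreach
  have hlM : pathEdges l ⊆ M := pathEdges_subset_iff.mpr hl.2.2.2
  have hlM_eq : pathEdges l = M := by
    by_contra hne
    exact hmin _ (Finset.ssubset_iff_subset_ne.mpr ⟨hlM, hne⟩) hl.restrict_pathEdges.reach
  exact ⟨l, hl.mono hMO, hlM_eq⟩

end Justification

theorem stmt_14_general {V : Type*}
    (O : Finset (V × V)) (v w : V) :
    (∃! M : Finset (V × V),
        IsJustification (fun S c => Reach S c.1 c.2) O M (v, w)) ↔
      (∃! l : List V, IsSimplePath O l v w) := by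
  classical
  constructor
  · rintro ⟨M, hM, hM_unique⟩
    obtain ⟨l, hl, -⟩ := hM.exists_isSimplePath
    refine ⟨l, hl, fun l' hl' => ?_⟩
    have hedges : pathEdges l' = pathEdges l :=
      (hM_unique _ hl'.isJustification_pathEdges).trans
        (hM_unique _ hl.isJustification_pathEdges).symm
    exact eq_of_pathEdges_subset hl.1 hl'.1 (hl'.2.1.trans hl.2.1.symm)
      (hl'.2.2.1.trans hl.2.2.1.symm) hedges.subset
  · rintro ⟨l, hl, hl_unique⟩
    refine ⟨pathEdges l, hl.isJustification_pathEdges, fun M hM => ?_⟩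
    obtain ⟨l', hl', rfl⟩ := hM.exists_isSimplePath
    rw [hl_unique l' hl']

theorem stmt_14 {V : Type*} [Countable V] [DecidableEq V]
    (O : Finset (V × V)) (v w : V) (hvw : v ≠ w) (h : Reach O v w) :
    (∃! M : Finset (V × V),
        IsJustification (fun S c => Reach S c.1 c.2) O M (v, w)) ↔
      (∃! l : List V, IsSimplePath O l v w) :=
  stmt_14_general O v w
end
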